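/- arXiv:1706.08559 — 6 statements merged into one kernel-verified Lean document; each statement's English description precedes it below -/
import Mathlib

section
/- Let f and g be pseudomonomials in F_2[x_1,...,x_n], where a pseudomonomial is a product ∏_{i∈σ} x_i · ∏_{j∈τ} (1−x_j) with σ, τ ⊆ [n] disjoint. Then f divides g in F_2[x_1,...,x_n] if and only if the polarization P(f) divides P(g) in F_2[x_1,...,x_n,y_1,...,y_n], where the polarization of ∏_{i∈σ} x_i ∏_{j∈τ}(1−x_j) is the squarefree monomial ∏_{i∈σ} x_i ∏_{j∈τ} y_j. -/
open MvPolynomial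

/-- The pseudomonomial with data `(σ, τ)`: `∏_{i∈σ} x_i · ∏_{j∈τ} (1 - x_j)`. -/
noncomputable def psm {n : ℕ} (σ τ : Finset (Fin n)) :
    MvPolynomial (Fin n) (ZMod 2) :=
  (∏ i ∈ σ, X i) * ∏ j ∈ τ, (1 - X j)

/-- The polarization of the pseudomonomial with data `(σ, τ)`:
the squarefree monomial `∏_{i∈σ} x_i · ∏_{j∈τ} y_j` in
`S = F₂[x_1,…,x_n,y_1,…,y_n]`, where `x_i = X (Sum.inl i)` and `y_j = X (Sum.inr j)`. -/
noncomputable def polz {n : ℕ} (σ τ : Finset (Fin n)) :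
    MvPolynomial (Fin n ⊕ Fin n) (ZMod 2) :=
  (∏ i ∈ σ, X (Sum.inl i)) * ∏ j ∈ τ, X (Sum.inr j)

/-! Both divisibilities amount to `σf ⊆ σg ∧ τf ⊆ τg`. For the squarefree monomials this is
seen by evaluating at points with a single zero coordinate. For the pseudomonomials, `psm σ τ`
evaluated at the 0/1-point of a set `s` is nonzero iff `σ ⊆ s` and `τ ∩ s = ∅`; since `σg` and
`τg` are disjoint, `psm σg τg` is nonzero at the points of `σg` and of `τgᶜ`, hence so is any
divisor `psm σf τf`, which gives `σf ⊆ σg` and `τf ⊆ τg`. -/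

theorem prod_X_dvd_prod_X_iff {σ R : Type*} [CommSemiring R] [Nontrivial R] {s t : Finset σ} :
    ∏ i ∈ s, (X i : MvPolynomial σ R) ∣ ∏ i ∈ t, X i ↔ s ⊆ t := by
  refine ⟨fun h i hi => ?_, fun h => Finset.prod_dvd_prod_of_subset s t X h⟩
  by_contra hit
  classical
  have hdvd := map_dvd (eval fun k => if k = i then (0 : R) else 1) h
  rw [eval_prod, eval_prod, Finset.prod_eq_zero hi (by simp),
    Finset.prod_eq_one (fun k hk => by simp [ne_of_mem_of_not_mem hk hit]), zero_dvd_iff] at hdvd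
  exact one_ne_zero hdvd

theorem polz_eq_prod_X {n : ℕ} (σ τ : Finset (Fin n)) :
    polz σ τ = ∏ k ∈ σ.disjSum τ, X k := by
  rw [Finset.prod_disjSum, polz]

theorem polz_dvd_polz_iff {n : ℕ} {σf τf σg τg : Finset (Fin n)} :
    polz σf τf ∣ polz σg τg ↔ σf ⊆ σg ∧ τf ⊆ τg := by
  rw [polz_eq_prod_X, polz_eq_prod_X, prod_X_dvd_prod_X_iff, Finset.disjSum_subset,
    Finset.toLeft_disjSum, Finset.toRight_disjSum]

theorem eval_indicator_psm_ne_zero_iff {n : ℕ} (s σ τ : Finset (Fin n)) :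
    eval (fun i => if i ∈ s then 1 else 0) (psm σ τ) ≠ 0 ↔ σ ⊆ s ∧ Disjoint τ s := by
  simp only [psm, map_mul, map_prod, eval_X, map_sub, map_one, mul_ne_zero_iff,
    Finset.prod_ne_zero_iff, Finset.disjoint_left]
  exact and_congr (forall₂_congr fun i _ => by by_cases h : i ∈ s <;> simp [h])
    (forall₂_congr fun j _ => by by_cases h : j ∈ s <;> simp [h])

theorem psm_dvd_psm_iff {n : ℕ} {σf τf σg τg : Finset (Fin n)} (hg : Disjoint σg τg) :
    psm σf τf ∣ psm σg τg ↔ σf ⊆ σg ∧ τf ⊆ τg := by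
  refine ⟨fun h => ?_, fun ⟨hσ, hτ⟩ => mul_dvd_mul (Finset.prod_dvd_prod_of_subset _ _ _ hσ)
    (Finset.prod_dvd_prod_of_subset _ _ _ hτ)⟩
  have transfer : ∀ s, σg ⊆ s ∧ Disjoint τg s → σf ⊆ s ∧ Disjoint τf s := fun s hs =>
    (eval_indicator_psm_ne_zero_iff s σf τf).mp <| ne_zero_of_dvd_ne_zero
      ((eval_indicator_psm_ne_zero_iff s σg τg).mpr hs) (map_dvd _ h)
  obtain ⟨hσ, -⟩ := transfer σg ⟨subset_rfl, hg.symm⟩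
  obtain ⟨-, hτ⟩ := transfer τgᶜ ⟨Finset.subset_compl_iff_disjoint_right.mpr hg, disjoint_compl_right⟩
  exact ⟨hσ, disjoint_compl_right_iff.mp hτ⟩

theorem polarization_preserves_divisibility_general {n : ℕ}
    (σf τf σg τg : Finset (Fin n)) (hg : Disjoint σg τg) :
    psm σf τf ∣ psm σg τg ↔ polz σf τf ∣ polz σg τg :=
  (psm_dvd_psm_iff hg).trans polz_dvd_polz_iff.symm

theorem polarization_preserves_divisibility {n : ℕ}
    (σf τf σg τg : Finset (Fin n)) (hf : Disjoint σf τf) (hg : Disjoint σg τg) :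
    psm σf τf ∣ psm σg τg ↔ polz σf τf ∣ polz σg τg :=
  polarization_preserves_divisibility_general σf τf σg τg hg
end

section
/- Let I = ⟨f_1,...,f_ℓ⟩ be a pseudomonomial ideal in R = F_2[x_1,...,x_n] where f_1,...,f_ℓ is the set of all minimal pseudomonomials in I (canonical form). Let J = ⟨P(f_1),...,P(f_ℓ)⟩ in S = F_2[x_1,...,x_n,y_1,...,y_n]. Then for every pseudomonomial f in R, f ∈ I if and only if P(f) ∈ J. -/
open MvPolynomial

/-- A pseudomonomial: a product `∏_{i∈σ} x_i ∏_{j∈τ}(1 - x_j)` with `σ, τ` disjoint. -/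
def IsPseudomonomial {n : ℕ} (f : MvPolynomial (Fin n) (ZMod 2)) : Prop :=
  ∃ σ τ : Finset (Fin n), Disjoint σ τ ∧ f = psm σ τ

/-- `f` is a minimal pseudomonomial of `I`: `f` is a pseudomonomial lying in `I`
and no proper divisor of `f` lies in `I`. -/
def IsMinimalPseudomonomial {n : ℕ} (I : Ideal (MvPolynomial (Fin n) (ZMod 2)))
    (f : MvPolynomial (Fin n) (ZMod 2)) : Prop :=
  IsPseudomonomial f ∧ f ∈ I ∧
    ∀ g : MvPolynomial (Fin n) (ZMod 2), g ∣ f → ¬ f ∣ g → g ∉ I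

/-! The forward direction rests on a descent: every pseudomonomial of `I` is a multiple of a minimal
one, hence (canonical form) of a generator. Since `x_i` and `1 - x_i` are primes, the divisors of
a pseudomonomial are (up to units) the pseudomonomials on smaller index sets, and over `F₂` a
pseudomonomial `f_{σ,τ}` divides `f_{σ',τ'}` only if `σ ⊆ σ'` and `τ ⊆ τ'`: evaluate at the
points where `f_{σ',τ'}` is nonzero. Polarization turns these inclusions back into divisibility.
The converse direction is the substitution `y_j ↦ 1 - x_j`, which sends each generator of `J`
to the corresponding generator of `I`. -/

theorem exists_subset_associated_of_dvd_prod {α ι : Type*} [CommMonoid α] [DecompositionMonoid α]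
    {s : Finset ι} {p : ι → α} (hp : ∀ i ∈ s, Irreducible (p i)) {g : α}
    (hg : g ∣ ∏ i ∈ s, p i) : ∃ t ⊆ s, Associated g (∏ i ∈ t, p i) := by
  classical
  induction s using Finset.induction_on generalizing g with
  | empty =>
    exact ⟨∅, subset_rfl, by simpa [associated_one_iff_isUnit] using isUnit_of_dvd_one hg⟩
  | insert a s ha ih =>
    rw [Finset.prod_insert ha] at hg
    obtain ⟨d, e, hd, he, rfl⟩ := exists_dvd_and_dvd_of_dvd_mul hg
    obtain ⟨t, hts, hte⟩ := ih (fun i hi => hp i (Finset.mem_insert_of_mem hi)) he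
    rcases (hp a (Finset.mem_insert_self a s)).dvd_iff.mp hd with hunit | hassoc
    · exact ⟨t, hts.trans (Finset.subset_insert a s), (associated_unit_mul_left e d hunit).trans hte⟩
    · refine ⟨insert a t, Finset.insert_subset_insert a hts, ?_⟩
      rw [Finset.prod_insert fun hat => ha (hts hat)]
      exact hassoc.symm.mul_mul hte

namespace MvPolynomial

theorem prime_one_sub_X {σ R : Type*} [CommRing R] [IsDomain R] (i : σ) :
    Prime (1 - X i : MvPolynomial σ R) := by
  classical
  let φ : MvPolynomial σ R →ₐ[R] MvPolynomial σ R := aeval (Function.update X i (1 - X i))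
  have hφφ : φ.comp φ = AlgHom.id R _ := by
    ext j
    by_cases hj : j = i
    · subst hj
      simp [φ]
    · simp [φ, hj]
  have hφX : AlgEquiv.ofAlgHom φ φ hφφ hφφ (X i) = 1 - X i := by simp [φ]
  rw [← hφX, MulEquiv.prime_iff]
  exact X_prime

end MvPolynomial

section Pseudomonomial

variable {n : ℕ}

theorem exists_subset_associated_psm_of_dvd {σ τ : Finset (Fin n)}
    {g : MvPolynomial (Fin n) (ZMod 2)} (hg : g ∣ psm σ τ) :
    ∃ σ' ⊆ σ, ∃ τ' ⊆ τ, Associated g (psm σ' τ') := by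
  obtain ⟨g₁, g₂, h₁, h₂, rfl⟩ := exists_dvd_and_dvd_of_dvd_mul hg
  obtain ⟨σ', hσ', a₁⟩ :=
    exists_subset_associated_of_dvd_prod (fun i _ => (X_prime (R := ZMod 2)).irreducible) h₁
  obtain ⟨τ', hτ', a₂⟩ :=
    exists_subset_associated_of_dvd_prod (fun i _ => (prime_one_sub_X i).irreducible) h₂
  exact ⟨σ', hσ', τ', hτ', a₁.mul_mul a₂⟩

theorem eval_psm_ne_zero_iff (v : Fin n → ZMod 2) (σ τ : Finset (Fin n)) :
    eval v (psm σ τ) ≠ 0 ↔ (∀ i ∈ σ, v i = 1) ∧ ∀ j ∈ τ, v j = 0 := by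
  have hx : ∀ a : ZMod 2, a ≠ 0 ↔ a = 1 := by decide
  simp [psm, hx]

theorem subset_of_psm_dvd_psm {σ τ σ' τ' : Finset (Fin n)} (hdisj : Disjoint σ' τ')
    (hdvd : psm σ τ ∣ psm σ' τ') : σ ⊆ σ' ∧ τ ⊆ τ' := by
  classical
  have hbox : ∀ v : Fin n → ZMod 2, (∀ i ∈ σ', v i = 1) → (∀ j ∈ τ', v j = 0) →
      (∀ i ∈ σ, v i = 1) ∧ ∀ j ∈ τ, v j = 0 := by
    intro v h₁ h₂
    obtain ⟨c, hc⟩ := hdvd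
    rw [← eval_psm_ne_zero_iff]
    have hne := (eval_psm_ne_zero_iff v σ' τ').mpr ⟨h₁, h₂⟩
    rw [hc, map_mul] at hne
    exact left_ne_zero_of_mul hne
  constructor
  · intro i hi
    by_contra hiσ'
    have hv := (hbox (fun k => if k ∈ σ' then 1 else 0) (by simp +contextual)
      (fun j hj => by simp [Finset.disjoint_right.mp hdisj hj])).1 i hi
    simp [hiσ'] at hv
  · intro j hj
    by_contra hjτ'
    have hv := (hbox (fun k => if k ∈ τ' then 0 else 1)
      (fun i hi => by simp [Finset.disjoint_left.mp hdisj hi]) (by simp +contextual)).2 j hj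
    simp [hjτ'] at hv

theorem exists_isMinimalPseudomonomial_of_psm_mem {I : Ideal (MvPolynomial (Fin n) (ZMod 2))}
    {σ τ : Finset (Fin n)} (hdisj : Disjoint σ τ) (hmem : psm σ τ ∈ I) :
    ∃ σ' ⊆ σ, ∃ τ' ⊆ τ, IsMinimalPseudomonomial I (psm σ' τ') := by
  obtain ⟨⟨σ', τ'⟩, hle, hmin⟩ :=
    exists_minimal_le_of_wellFoundedLT (fun p : Finset (Fin n) × Finset (Fin n) => psm p.1 p.2 ∈ I)
      (σ, τ) hmem
  obtain ⟨hσ', hτ'⟩ := Prod.mk_le_mk.mp hle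
  refine ⟨σ', hσ', τ', hτ', ⟨σ', τ', hdisj.mono hσ' hτ', rfl⟩, hmin.prop, ?_⟩
  intro g hg hndvd hgI
  obtain ⟨σ'', hσ'', τ'', hτ'', hassoc⟩ := exists_subset_associated_psm_of_dvd hg
  have hle' : (σ'', τ'') ≤ (σ', τ') := Prod.mk_le_mk.mpr ⟨hσ'', hτ''⟩
  have hmem'' : psm σ'' τ'' ∈ I := I.mem_of_dvd hassoc.dvd hgI
  obtain ⟨rfl, rfl⟩ := Prod.ext_iff.mp (le_antisymm hle' (hmin.le_of_le hmem'' hle'))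
  exact hndvd hassoc.symm.dvd

theorem polz_dvd_polz {σ τ σ' τ' : Finset (Fin n)} (hσ : σ ⊆ σ') (hτ : τ ⊆ τ') :
    polz σ τ ∣ polz σ' τ' :=
  mul_dvd_mul (Finset.prod_dvd_prod_of_subset _ _ _ hσ) (Finset.prod_dvd_prod_of_subset _ _ _ hτ)

theorem aeval_polz (σ τ : Finset (Fin n)) :
    aeval (Sum.elim X fun j => 1 - X j) (polz σ τ) = psm σ τ := by
  simp [polz, psm]

end Pseudomonomial

theorem mem_iff_polarization_mem_general {n ℓ : ℕ}
    (σ τ : Fin ℓ → Finset (Fin n))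
    (I : Ideal (MvPolynomial (Fin n) (ZMod 2)))
    (hI : I = Ideal.span (Set.range fun k => psm (σ k) (τ k)))
    (hCF : ∀ f, IsMinimalPseudomonomial I f ↔ ∃ k, f = psm (σ k) (τ k))
    (J : Ideal (MvPolynomial (Fin n ⊕ Fin n) (ZMod 2)))
    (hJ : J = Ideal.span (Set.range fun k => polz (σ k) (τ k)))
    (σf τf : Finset (Fin n)) (hf : Disjoint σf τf) :
    psm σf τf ∈ I ↔ polz σf τf ∈ J := by
  constructor
  · intro hmem
    obtain ⟨σ', hσ', τ', hτ', hmin⟩ := exists_isMinimalPseudomonomial_of_psm_mem hf hmem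
    obtain ⟨k, hk⟩ := (hCF _).mp hmin
    obtain ⟨hσk, hτk⟩ := subset_of_psm_dvd_psm (hf.mono hσ' hτ') (dvd_of_eq hk.symm)
    rw [hJ]
    exact Ideal.mem_of_dvd _ (polz_dvd_polz (hσk.trans hσ') (hτk.trans hτ'))
      (Ideal.subset_span ⟨k, rfl⟩)
  · intro hmem
    have hmapJ : J.map (aeval (Sum.elim X fun j => 1 - X j)) = I := by
      rw [hJ, hI, Ideal.map_span, ← Set.range_comp]
      simp only [Function.comp_def, aeval_polz]
    rw [← hmapJ, ← aeval_polz]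
    exact Ideal.mem_map_of_mem _ hmem

theorem mem_iff_polarization_mem {n ℓ : ℕ}
    (σ τ : Fin ℓ → Finset (Fin n)) (hdisj : ∀ k, Disjoint (σ k) (τ k))
    (I : Ideal (MvPolynomial (Fin n) (ZMod 2)))
    (hI : I = Ideal.span (Set.range fun k => psm (σ k) (τ k)))
    (hCF : ∀ f, IsMinimalPseudomonomial I f ↔ ∃ k, f = psm (σ k) (τ k))
    (J : Ideal (MvPolynomial (Fin n ⊕ Fin n) (ZMod 2)))
    (hJ : J = Ideal.span (Set.range fun k => polz (σ k) (τ k)))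
    (σf τf : Finset (Fin n)) (hf : Disjoint σf τf) :
    psm σf τf ∈ I ↔ polz σf τf ∈ J :=
  mem_iff_polarization_mem_general σ τ I hI hCF J hJ σf τf hf
end

section
/- Let I = ⟨f_1,...,f_ℓ⟩ be a pseudomonomial ideal in canonical form in R = F_2[x_1,...,x_n]. Then ⟨P(f_1),...,P(f_ℓ)⟩ equals the ideal of S = F_2[x_1,...,x_n,y_1,...,y_n] generated by {P(f) : f a pseudomonomial in I}; in particular it is the smallest ideal J of S such that for every pseudomonomial f ∈ R, f ∈ I implies P(f) ∈ J. -/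
open MvPolynomial

/-!
Every pseudomonomial `f ∈ I` is divisible by a minimal pseudomonomial of `I`: the factors `x_i`
and `1 - x_j` are prime, so the divisors of `f` are, up to units, the pseudomonomials on subsets of
its supports, and a minimal such one lying in `I` is minimal in `I`. By canonical form it is one of
the `f_k`, and the inclusion of supports gives `P(f_k) ∣ P(f)`. Conversely each `f_k` is itself a
pseudomonomial of `I`.
-/

theorem MvPolynomial.prime_one_sub_X_s3 {R σ : Type*} [CommRing R] [IsCancelMulZero R] [Nontrivial R]
    (i : σ) : Prime (1 - X i : MvPolynomial σ R) := by
  classical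
  let φ : MvPolynomial σ R →ₐ[R] MvPolynomial σ R := aeval (Function.update X i (1 - X i))
  have hφ : φ.comp φ = AlgHom.id R _ := by
    ext j
    rcases eq_or_ne j i with rfl | hj <;> simp [φ, Function.update_of_ne, *]
  have hX : AlgEquiv.ofAlgHom φ φ hφ hφ (X i) = 1 - X i := by simp [φ]
  rw [← hX, MulEquiv.prime_iff]
  exact X_prime

theorem Finset.exists_subset_associated_prod_of_dvd_prod {ι M : Type*} [CommMonoidWithZero M]
    [IsCancelMulZero M] [DecompositionMonoid M] {s : Finset ι} {p : ι → M}
    (hp : ∀ i ∈ s, Prime (p i)) {a : M} (ha : a ∣ ∏ i ∈ s, p i) :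
    ∃ t ⊆ s, Associated a (∏ i ∈ t, p i) := by
  classical
  induction s using Finset.induction_on generalizing a with
  | empty =>
    exact ⟨∅, subset_rfl, by simpa [associated_one_iff_isUnit] using isUnit_of_dvd_one ha⟩
  | insert j s hj ih =>
    rw [prod_insert hj] at ha
    obtain ⟨d₁, d₂, hd₁, hd₂, rfl⟩ := exists_dvd_and_dvd_of_dvd_mul ha
    obtain ⟨t, hts, ht⟩ := ih (fun i hi => hp i (mem_insert_of_mem hi)) hd₂
    obtain ⟨e, he⟩ := hd₁
    rcases (hp j (mem_insert_self j s)).irreducible.isUnit_or_isUnit he with hu | hu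
    · exact ⟨t, hts.trans (subset_insert j s), (associated_isUnit_mul_left_iff hu).2 ht⟩
    · refine ⟨insert j t, insert_subset_insert j hts, ?_⟩
      rw [prod_insert (fun hjt => hj (hts hjt))]
      exact (he ▸ associated_mul_unit_right d₁ e hu).mul_mul ht

section Pseudomonomial

variable {n : ℕ}

theorem psm_eq_prod_disjSum (σ τ : Finset (Fin n)) :
    psm σ τ = ∏ k ∈ σ.disjSum τ, Sum.elim (X ·) (1 - X ·) k := by
  rw [Finset.prod_disjSum]; rfl

theorem eval_psm_eq_one_iff (a : Fin n → ZMod 2) (σ τ : Finset (Fin n)) :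
    eval a (psm σ τ) = 1 ↔ (∀ i ∈ σ, a i = 1) ∧ ∀ j ∈ τ, a j = 0 := by
  have hx : ∀ x : ZMod 2, x = 1 ↔ x ≠ 0 := by decide
  have hy : ∀ x : ZMod 2, 1 - x ≠ 0 ↔ x = 0 := by decide
  simp only [psm, map_mul, map_prod, map_sub, map_one, eval_X, hx, mul_ne_zero_iff,
    Finset.prod_ne_zero_iff, hy]

theorem subset_of_psm_eq {σ τ σ' τ' : Finset (Fin n)} (hd : Disjoint σ' τ')
    (h : psm σ τ = psm σ' τ') : σ ⊆ σ' ∧ τ ⊆ τ' := by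
  have key (a : Fin n → ZMod 2) (h₁ : ∀ i ∈ σ', a i = 1) (h₀ : ∀ j ∈ τ', a j = 0) :
      (∀ i ∈ σ, a i = 1) ∧ ∀ j ∈ τ, a j = 0 := by
    rw [← eval_psm_eq_one_iff, h, eval_psm_eq_one_iff]
    exact ⟨h₁, h₀⟩
  constructor
  · intro i hi
    by_contra hi'
    have := (key (fun j => if j ∈ σ' then 1 else 0) (fun j hj => by simp [hj])
      (fun j hj => by simp [Finset.disjoint_right.1 hd hj])).1 i hi
    simp [hi'] at this
  · intro i hi
    by_contra hi'
    have := (key (fun j => if j ∈ τ' then 0 else 1)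
      (fun j hj => by simp [Finset.disjoint_left.1 hd hj]) (fun j hj => by simp [hj])).2 i hi
    simp [hi'] at this

theorem disjoint_of_isPseudomonomial_psm {σ τ : Finset (Fin n)}
    (h : IsPseudomonomial (psm σ τ)) : Disjoint σ τ := by
  obtain ⟨σ', τ', hd, he⟩ := h
  obtain ⟨hσ, hτ⟩ := subset_of_psm_eq hd he
  exact hd.mono hσ hτ

theorem isMinimalPseudomonomial_psm {I : Ideal (MvPolynomial (Fin n) (ZMod 2))}
    {σ τ : Finset (Fin n)} (hd : Disjoint σ τ)
    (hmin : Minimal (fun p : Finset (Fin n) × Finset (Fin n) => psm p.1 p.2 ∈ I) (σ, τ)) :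
    IsMinimalPseudomonomial I (psm σ τ) := by
  refine ⟨⟨σ, τ, hd, rfl⟩, hmin.prop, fun g hg hng hgI => hng ?_⟩
  obtain ⟨σ', hσ', τ', hτ', hassoc⟩ := exists_subset_associated_psm_of_dvd hg
  have hI' : psm σ' τ' ∈ I := by
    obtain ⟨u, hu⟩ := hassoc
    exact hu ▸ I.mul_mem_right _ hgI
  obtain ⟨hσ, hτ⟩ := Prod.mk_le_mk.1 (hmin.2 (y := (σ', τ')) hI' ⟨hσ', hτ'⟩)
  rw [Finset.Subset.antisymm hσ' hσ, Finset.Subset.antisymm hτ' hτ] at hassoc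
  exact hassoc.symm.dvd

theorem exists_isMinimalPseudomonomial_psm_of_mem {I : Ideal (MvPolynomial (Fin n) (ZMod 2))}
    {σ τ : Finset (Fin n)} (hd : Disjoint σ τ) (hI : psm σ τ ∈ I) :
    ∃ σ' ⊆ σ, ∃ τ' ⊆ τ, IsMinimalPseudomonomial I (psm σ' τ') := by
  obtain ⟨⟨σ', τ'⟩, ⟨hσ, hτ⟩, hmin⟩ := exists_minimal_le_of_wellFoundedLT
    (fun p : Finset (Fin n) × Finset (Fin n) => psm p.1 p.2 ∈ I) (σ, τ) hI
  exact ⟨σ', hσ, τ', hτ, isMinimalPseudomonomial_psm (hd.mono hσ hτ) hmin⟩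

end Pseudomonomial

theorem polarization_span_canonical_form_general {n ℓ : ℕ}
    (σ τ : Fin ℓ → Finset (Fin n))
    (I : Ideal (MvPolynomial (Fin n) (ZMod 2)))
    (hCF : ∀ f, IsMinimalPseudomonomial I f ↔ ∃ k, f = psm (σ k) (τ k)) :
    Ideal.span (Set.range fun k => polz (σ k) (τ k)) =
      Ideal.span {m : MvPolynomial (Fin n ⊕ Fin n) (ZMod 2) |
        ∃ σf τf : Finset (Fin n), Disjoint σf τf ∧ psm σf τf ∈ I ∧ m = polz σf τf} ∧
    ∀ J : Ideal (MvPolynomial (Fin n ⊕ Fin n) (ZMod 2)),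
      (∀ σf τf : Finset (Fin n), Disjoint σf τf → psm σf τf ∈ I → polz σf τf ∈ J) →
      Ideal.span (Set.range fun k => polz (σ k) (τ k)) ≤ J := by
  have hgen (k : Fin ℓ) : Disjoint (σ k) (τ k) ∧ psm (σ k) (τ k) ∈ I :=
    have hmin := (hCF _).2 ⟨k, rfl⟩
    ⟨disjoint_of_isPseudomonomial_psm hmin.1, hmin.2.1⟩
  have hpolz {σf τf : Finset (Fin n)} (hd : Disjoint σf τf) (hI : psm σf τf ∈ I) :
      polz σf τf ∈ Ideal.span (Set.range fun k => polz (σ k) (τ k)) := by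
    obtain ⟨σ', hσ', τ', hτ', hmin⟩ := exists_isMinimalPseudomonomial_psm_of_mem hd hI
    obtain ⟨k, hk⟩ := (hCF _).1 hmin
    obtain ⟨hσk, hτk⟩ := subset_of_psm_eq (hd.mono hσ' hτ') hk.symm
    exact Ideal.mem_of_dvd _ (polz_dvd_polz (hσk.trans hσ') (hτk.trans hτ'))
      (Ideal.subset_span ⟨k, rfl⟩)
  refine ⟨le_antisymm ?_ ?_, fun J hJ => ?_⟩
  · exact Ideal.span_le.2 fun _ ⟨k, hk⟩ =>
      Ideal.subset_span ⟨σ k, τ k, (hgen k).1, (hgen k).2, hk.symm⟩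
  · exact Ideal.span_le.2 fun _ ⟨σf, τf, hd, hI, hm⟩ => hm ▸ hpolz hd hI
  · exact Ideal.span_le.2 fun _ ⟨k, hk⟩ => hk ▸ hJ _ _ (hgen k).1 (hgen k).2

theorem polarization_span_canonical_form {n ℓ : ℕ}
    (σ τ : Fin ℓ → Finset (Fin n)) (hdisj : ∀ k, Disjoint (σ k) (τ k))
    (I : Ideal (MvPolynomial (Fin n) (ZMod 2)))
    (hI : I = Ideal.span (Set.range fun k => psm (σ k) (τ k)))
    (hCF : ∀ f, IsMinimalPseudomonomial I f ↔ ∃ k, f = psm (σ k) (τ k)) :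
    Ideal.span (Set.range fun k => polz (σ k) (τ k)) =
      Ideal.span {m : MvPolynomial (Fin n ⊕ Fin n) (ZMod 2) |
        ∃ σf τf : Finset (Fin n), Disjoint σf τf ∧ psm σf τf ∈ I ∧ m = polz σf τf} ∧
    ∀ J : Ideal (MvPolynomial (Fin n ⊕ Fin n) (ZMod 2)),
      (∀ σf τf : Finset (Fin n), Disjoint σf τf → psm σf τf ∈ I → polz σf τf ∈ J) →
      Ideal.span (Set.range fun k => polz (σ k) (τ k)) ≤ J :=
  polarization_span_canonical_form_general σ τ I hCF
end

section
/- Let I be a pseudomonomial ideal in canonical form in R = F_2[x_1,...,x_n] and let p be a pseudomonomial prime, i.e., an ideal generated by a subset of {x_i : i ∈ A} ∪ {1−x_j : j ∈ B} with A, B disjoint subsets of [n]. Then I ⊆ p if and only if P(I) ⊆ P(p), where P denotes polarization; moreover P(p) is a prime ideal of S = F_2[x_1,...,x_n,y_1,...,y_n] generated by a subset of the variables. -/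
open MvPolynomial

/-!
Both `p` and `P(p)` are kernels of substitutions into a polynomial ring over a domain: `p` of
`x_i ↦ 0` (`i ∈ A`), `x_j ↦ 1` (`j ∈ B`), and `P(p)` of the analogous substitution setting the
variables `x_i` (`i ∈ A`) and `y_j` (`j ∈ B`) to `0`. Hence both are prime, so a (polarized)
pseudomonomial lies in either one iff one of its factors does, and in both cases this happens
iff `σ` meets `A` or `τ` meets `B`.
-/

namespace MvPolynomial

variable {ι R : Type*} [CommRing R]

open Classical in
/-- Specialization of the variables at the fixed coordinates of a pseudomonomial prime `p_α`:
`A = α⁻¹(0)`, `B = α⁻¹(1)`. -/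
noncomputable def substZeroOne (A B : Set ι) : ι → MvPolynomial ι R :=
  fun i => if i ∈ A then 0 else if i ∈ B then 1 else X i

theorem sub_aeval_mem_of_forall_X_sub_mem {I : Ideal (MvPolynomial ι R)}
    {g : ι → MvPolynomial ι R} (hg : ∀ i, X i - g i ∈ I) (f : MvPolynomial ι R) :
    f - aeval g f ∈ I := by
  have hmk : Ideal.Quotient.mkₐ R I = (Ideal.Quotient.mkₐ R I).comp (aeval g) :=
    algHom_ext fun i => (Ideal.Quotient.mk_eq_mk_iff_sub_mem _ _).mpr (by simpa using hg i)
  rw [← Ideal.Quotient.mk_eq_mk_iff_sub_mem]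
  exact DFunLike.congr_fun hmk f

theorem ker_aeval_substZeroOne {A B : Set ι} (hAB : Disjoint A B) :
    RingHom.ker (aeval (substZeroOne (R := R) A B)) =
      Ideal.span (X '' A ∪ (fun j => 1 - X j) '' B : Set (MvPolynomial ι R)) := by
  classical
  apply le_antisymm
  · intro f hf
    have hX : ∀ i, X i - substZeroOne A B i ∈
        Ideal.span (X '' A ∪ (fun j => 1 - X j) '' B : Set (MvPolynomial ι R)) := by
      intro i
      by_cases hA : i ∈ A
      · rw [substZeroOne, if_pos hA, sub_zero]
        exact Ideal.subset_span (Or.inl ⟨i, hA, rfl⟩)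
      by_cases hB : i ∈ B
      · rw [substZeroOne, if_neg hA, if_pos hB, ← neg_sub]
        exact neg_mem (Ideal.subset_span (Or.inr ⟨i, hB, rfl⟩))
      · rw [substZeroOne, if_neg hA, if_neg hB, sub_self]
        exact zero_mem _
    have hf' := sub_aeval_mem_of_forall_X_sub_mem hX f
    rwa [RingHom.mem_ker.mp hf, sub_zero] at hf'
  · rw [Ideal.span_le]
    rintro f (⟨i, hi, rfl⟩ | ⟨j, hj, rfl⟩)
    · simp [substZeroOne, hi]
    · simp [substZeroOne, hj, Set.disjoint_right.mp hAB hj]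

variable {A B : Set ι}

theorem isPrime_span_X_image_union_one_sub_X_image [IsDomain R] (hAB : Disjoint A B) :
    (Ideal.span (X '' A ∪ (fun j => 1 - X j) '' B : Set (MvPolynomial ι R))).IsPrime :=
  ker_aeval_substZeroOne (R := R) hAB ▸ RingHom.ker_isPrime _

theorem X_mem_span_X_image_union_one_sub_X_image_iff [Nontrivial R] (hAB : Disjoint A B)
    (i : ι) :
    X i ∈ Ideal.span (X '' A ∪ (fun j => 1 - X j) '' B : Set (MvPolynomial ι R)) ↔ i ∈ A := by
  classical
  rw [← ker_aeval_substZeroOne hAB, RingHom.mem_ker, aeval_X, substZeroOne]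
  split_ifs <;> simp_all [X_ne_zero]

theorem one_sub_X_mem_span_X_image_union_one_sub_X_image_iff [Nontrivial R]
    (hAB : Disjoint A B) (j : ι) :
    1 - X j ∈ Ideal.span (X '' A ∪ (fun j => 1 - X j) '' B : Set (MvPolynomial ι R)) ↔
      j ∈ B := by
  classical
  rw [← ker_aeval_substZeroOne hAB, RingHom.mem_ker, map_sub, map_one, aeval_X, substZeroOne]
  split_ifs with hA hB
  · simpa using Set.disjoint_left.mp hAB hA
  · simpa
  · simp only [hB, iff_false, sub_eq_zero]
    intro h
    simpa using congrArg (eval 0) h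

theorem isPrime_span_X_image [IsDomain R] (W : Set ι) :
    (Ideal.span (X '' W : Set (MvPolynomial ι R))).IsPrime := by
  simpa using isPrime_span_X_image_union_one_sub_X_image (R := R) (Set.disjoint_empty W)

theorem X_mem_span_X_image_iff [Nontrivial R] {W : Set ι} (i : ι) :
    X i ∈ Ideal.span (X '' W : Set (MvPolynomial ι R)) ↔ i ∈ W := by
  simpa using X_mem_span_X_image_union_one_sub_X_image_iff (R := R) (Set.disjoint_empty W) i

theorem span_X_inl_image_union_X_inr_image {κ : Type*} (A : Set ι) (B : Set κ) :
    Ideal.span ((fun i => X (Sum.inl i)) '' A ∪ (fun j => X (Sum.inr j)) '' B :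
        Set (MvPolynomial (ι ⊕ κ) R)) =
      Ideal.span (X '' (Sum.inl '' A ∪ Sum.inr '' B)) := by
  rw [Set.image_union, Set.image_image, Set.image_image]

end MvPolynomial

theorem Ideal.IsPrime.prod_mul_prod_mem_iff {R ι κ : Type*} [CommSemiring R] {P : Ideal R}
    (hP : P.IsPrime) {s : Finset ι} {t : Finset κ} (a : ι → R) (b : κ → R) :
    (∏ i ∈ s, a i) * ∏ j ∈ t, b j ∈ P ↔ (∃ i ∈ s, a i ∈ P) ∨ ∃ j ∈ t, b j ∈ P := by
  rw [hP.mul_mem_iff_mem_or_mem, hP.prod_mem_iff, hP.prod_mem_iff]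

theorem psm_mem_span_iff {n : ℕ} {A B : Set (Fin n)} (hAB : Disjoint A B)
    (σ τ : Finset (Fin n)) :
    psm σ τ ∈ Ideal.span (X '' A ∪ (fun j => 1 - X j) '' B) ↔
      (∃ i ∈ σ, i ∈ A) ∨ ∃ j ∈ τ, j ∈ B := by
  rw [psm, (isPrime_span_X_image_union_one_sub_X_image hAB).prod_mul_prod_mem_iff]
  simp only [X_mem_span_X_image_union_one_sub_X_image_iff hAB,
    one_sub_X_mem_span_X_image_union_one_sub_X_image_iff hAB]

theorem polz_mem_span_iff {n : ℕ} (A B : Set (Fin n)) (σ τ : Finset (Fin n)) :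
    polz σ τ ∈ Ideal.span (X '' (Sum.inl '' A ∪ Sum.inr '' B)) ↔
      (∃ i ∈ σ, i ∈ A) ∨ ∃ j ∈ τ, j ∈ B := by
  rw [polz, (isPrime_span_X_image _).prod_mul_prod_mem_iff]
  simp only [X_mem_span_X_image_iff, Set.mem_union, Set.mem_image, Sum.inl.injEq,
    Sum.inr.injEq, reduceCtorEq, exists_eq_right, and_false, exists_false, or_false, false_or]

theorem polarization_pseudomonomial_prime_general {n ℓ : ℕ}
    (σ τ : Fin ℓ → Finset (Fin n))
    (I : Ideal (MvPolynomial (Fin n) (ZMod 2)))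
    (hI : I = Ideal.span (Set.range fun k => psm (σ k) (τ k)))
    (A B : Set (Fin n)) (hAB : Disjoint A B)
    (p : Ideal (MvPolynomial (Fin n) (ZMod 2)))
    (hp : p = Ideal.span ((fun i => X i) '' A ∪ (fun j => 1 - X j) '' B))
    (Pp : Ideal (MvPolynomial (Fin n ⊕ Fin n) (ZMod 2)))
    (hPp : Pp = Ideal.span
      ((fun i => X (Sum.inl i)) '' A ∪ (fun j => X (Sum.inr j)) '' B)) :
    (I ≤ p ↔ Ideal.span (Set.range fun k => polz (σ k) (τ k)) ≤ Pp) ∧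
      Pp.IsPrime ∧
      ∃ W : Set (Fin n ⊕ Fin n), Pp = Ideal.span (MvPolynomial.X '' W) := by
  subst hI hp hPp
  rw [span_X_inl_image_union_X_inr_image]
  refine ⟨?_, isPrime_span_X_image _, _, rfl⟩
  simp only [Ideal.span_le, Set.range_subset_iff, SetLike.mem_coe, psm_mem_span_iff hAB,
    polz_mem_span_iff]

theorem polarization_pseudomonomial_prime {n ℓ : ℕ}
    (σ τ : Fin ℓ → Finset (Fin n)) (hdisj : ∀ k, Disjoint (σ k) (τ k))
    (I : Ideal (MvPolynomial (Fin n) (ZMod 2)))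
    (hI : I = Ideal.span (Set.range fun k => psm (σ k) (τ k)))
    (hCF : ∀ f, IsMinimalPseudomonomial I f ↔ ∃ k, f = psm (σ k) (τ k))
    (A B : Set (Fin n)) (hAB : Disjoint A B)
    (p : Ideal (MvPolynomial (Fin n) (ZMod 2)))
    (hp : p = Ideal.span ((fun i => X i) '' A ∪ (fun j => 1 - X j) '' B))
    (Pp : Ideal (MvPolynomial (Fin n ⊕ Fin n) (ZMod 2)))
    (hPp : Pp = Ideal.span
      ((fun i => X (Sum.inl i)) '' A ∪ (fun j => X (Sum.inr j)) '' B)) :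
    (I ≤ p ↔ Ideal.span (Set.range fun k => polz (σ k) (τ k)) ≤ Pp) ∧
      Pp.IsPrime ∧
      ∃ W : Set (Fin n ⊕ Fin n), Pp = Ideal.span (MvPolynomial.X '' W) :=
  polarization_pseudomonomial_prime_general σ τ I hI A B hAB p hp Pp hPp
end

section
/- For a neural code C ⊆ {0,1}^n, the vanishing ideal I_C = {f ∈ F_2[x_1,...,x_n] : f(c) = 0 for all c ∈ C} decomposes as I_C = B + J_C, where B = ⟨x_1²−x_1,...,x_n²−x_n⟩ and J_C = ⟨∏_{c_i=1} x_i · ∏_{c_j=0}(1−x_j) : c ∈ {0,1}^n \ C⟩. -/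
/-!
A polynomial vanishing on all of `𝔽_q^σ` lies in `⟨x_i^q - x_i⟩`: this is Alon's combinatorial
Nullstellensatz, since `∏_{r ∈ 𝔽_q} (x_i - r) = x_i^q - x_i`. Hence modulo `B` every `f` agrees
with its interpolant `∑_c f(c) ρ_c`. If `f` vanishes on `C`, only the `ρ_c` with `c ∉ C` survive
in the interpolant, which therefore lies in `J_C`. Conversely, every generator of `B` and of `J_C`
vanishes on `C`.
-/

open MvPolynomial

/-- The indicator pseudomonomial of a word `c ∈ {0,1}ⁿ`:
`∏_{c_i = 1} x_i · ∏_{c_j = 0} (1 - x_j)`. -/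
noncomputable def indic {n : ℕ} (c : Fin n → ZMod 2) :
    MvPolynomial (Fin n) (ZMod 2) :=
  ∏ i : Fin n, (if c i = 1 then X i else 1 - X i)

theorem FiniteField.prod_univ_X_sub_C {K : Type*} [Field K] [Fintype K] :
    ∏ r : K, (Polynomial.X - Polynomial.C r) = Polynomial.X ^ Fintype.card K - Polynomial.X := by
  have hmonic : (Polynomial.X ^ Fintype.card K - Polynomial.X : Polynomial K).Monic :=
    Polynomial.monic_X_pow_sub (by rw [Polynomial.degree_X]; exact_mod_cast Fintype.one_lt_card)
  have hcard : Multiset.card (Polynomial.X ^ Fintype.card K - Polynomial.X : Polynomial K).roots =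
      (Polynomial.X ^ Fintype.card K - Polynomial.X : Polynomial K).natDegree := by
    rw [roots_X_pow_card_sub_X, X_pow_card_sub_X_natDegree_eq K Fintype.one_lt_card]; rfl
  simpa [roots_X_pow_card_sub_X] using
    Polynomial.prod_multiset_X_sub_C_of_monic_of_roots_card_eq hmonic hcard

namespace MvPolynomial

variable {K σ : Type*} [Field K] [Fintype K] [Finite σ]

theorem mem_span_X_pow_card_sub_X_of_eval_eq_zero (f : MvPolynomial σ K)
    (hf : ∀ x : σ → K, eval x f = 0) :
    f ∈ Ideal.span (Set.range fun i => X i ^ Fintype.card K - X i) := by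
  obtain ⟨h, -, rfl⟩ := combinatorial_nullstellensatz_exists_linearCombination
    (fun _ => Finset.univ) (fun _ => Finset.univ_nonempty) f (fun x _ => hf x)
  have hprod (i : σ) :
      ∏ r : K, (X i - C r) = (X i ^ Fintype.card K - X i : MvPolynomial σ K) := by
    have := congrArg (Polynomial.aeval (X i : MvPolynomial σ K))
      (FiniteField.prod_univ_X_sub_C (K := K))
    simp only [map_prod, map_sub, map_pow, Polynomial.aeval_X, Polynomial.aeval_C] at this
    exact this
  simp only [hprod]
  rw [Ideal.span, ← Finsupp.range_linearCombination]
  exact LinearMap.mem_range_self _ h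

end MvPolynomial

theorem eval_indic {n : ℕ} (c d : Fin n → ZMod 2) :
    eval d (indic c) = if d = c then 1 else 0 := by
  have hfactor (a b : ZMod 2) : (if a = 1 then b else 1 - b) = if b = a then 1 else 0 := by
    revert a b; decide
  simp only [indic, map_prod, apply_ite (eval d), eval_X, map_sub, map_one, hfactor,
    Finset.prod_boole, Finset.mem_univ, true_implies, _root_.funext_iff]

theorem eval_sum_C_eval_mul_indic {n : ℕ} (f : MvPolynomial (Fin n) (ZMod 2))
    (d : Fin n → ZMod 2) :
    eval d (∑ c, C (eval c f) * indic c) = eval d f := by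
  simp [eval_indic]

theorem sub_sum_C_eval_mul_indic_mem_span_X_sq_sub_X {n : ℕ}
    (f : MvPolynomial (Fin n) (ZMod 2)) :
    f - ∑ c, C (eval c f) * indic c ∈ Ideal.span (Set.range fun i => X i ^ 2 - X i) := by
  have := mem_span_X_pow_card_sub_X_of_eval_eq_zero (f - ∑ c, C (eval c f) * indic c)
    fun d => by rw [map_sub, eval_sum_C_eval_mul_indic, sub_self]
  rwa [ZMod.card] at this

theorem vanishing_ideal_eq_boolean_add_neural {n : ℕ} (C : Set (Fin n → ZMod 2))
    (f : MvPolynomial (Fin n) (ZMod 2)) :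
    (∀ c ∈ C, eval c f = 0) ↔
      f ∈ Ideal.span (Set.range fun i : Fin n =>
            (X i ^ 2 - X i : MvPolynomial (Fin n) (ZMod 2))) +
          Ideal.span {g | ∃ c ∉ C, g = indic c} := by
  constructor
  · intro hf
    rw [← sub_add_cancel f (∑ c, MvPolynomial.C (eval c f) * indic c)]
    refine Submodule.add_mem_sup ?_ (sum_mem fun c _ => ?_)
    · exact sub_sum_C_eval_mul_indic_mem_span_X_sq_sub_X f
    · by_cases hc : c ∈ C
      · simp [hf c hc]
      · exact Ideal.mul_mem_left _ _ (Ideal.subset_span ⟨c, hc, rfl⟩)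
  · intro hf c hc
    refine (sup_le ?_ ?_ : _ ≤ RingHom.ker (eval c)) hf <;> rw [Ideal.span_le]
    · rintro _ ⟨i, rfl⟩
      simp
    · rintro _ ⟨d, hd, rfl⟩
      simp [eval_indic, show c ≠ d by rintro rfl; exact hd hc]
end

section
/- Let C ⊆ {0,1}^n be a neural code. For α ∈ {0,1,*}^n, let V_α = {c ∈ {0,1}^n : c_i = α_i whenever α_i ≠ *} and p_α = ⟨{x_i : α_i = 0}, {1−x_i : α_i = 1}⟩ ⊆ F_2[x_1,...,x_n]. Then the neural ideal satisfies J_C = ⋂_{α : V_α ⊆ C} p_α. -/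
open MvPolynomial

/-- The neural ideal of a code `C ⊆ {0,1}ⁿ`. -/
noncomputable def neuralIdeal {n : ℕ} (C : Set (Fin n → ZMod 2)) :
    Ideal (MvPolynomial (Fin n) (ZMod 2)) :=
  Ideal.span {f | ∃ c ∉ C, f = indic c}

/-- The interval associated to `α ∈ {0,1,*}ⁿ` (`none` plays the role of `*`):
codewords agreeing with `α` at all non-`*` coordinates. -/
def intervalOf {n : ℕ} (α : Fin n → Option (ZMod 2)) : Set (Fin n → ZMod 2) :=
  {c | ∀ i a, α i = some a → c i = a}

/-- The pseudomonomial prime associated to `α ∈ {0,1,*}ⁿ`: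
generated by the `x_i` with `α_i = 0` and the `1 - x_i` with `α_i = 1`. -/
noncomputable def psmPrime {n : ℕ} (α : Fin n → Option (ZMod 2)) :
    Ideal (MvPolynomial (Fin n) (ZMod 2)) :=
  Ideal.span ({f | ∃ i, α i = some 0 ∧ f = X i} ∪
    {f | ∃ i, α i = some 1 ∧ f = 1 - X i})

/-!
`psmPrime α` is the kernel of the substitution `x_i ↦ α_i` at the non-`*` coordinates. A word
`c ∉ V_α` differs from `α` at some `i`, and then the `i`-th factor of `indic c` is killed by this
substitution; this gives `J_C ≤ p_α`.

The converse goes by induction on `n`, splitting off `x_0`. Write `f = ∑ₖ x_0^k aₖ` and let `C_b`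
be the set of words `c` with `b :: c ∈ C`. The intervals inside `C` with first letter `b` are
those of `C_b`, and those with first letter `*` are those of `C_0 ∩ C_1`, so the induction
hypothesis puts `f(b, ·)` in `J_{C_b}` and every `aₖ` in `J_{C_0 ∩ C_1}`. Then
`f = (1 - x_0) f(0, ·) + x_0 f(1, ·) + ∑ₖ (x_0^k - (1 - x_0) 0^k - x_0) aₖ`, where
`x_0 (x_0 - 1)` divides every `x_0^k - (1 - x_0) 0^k - x_0`, and `J_C` contains
`(1 - x_0) J_{C_0}`, `x_0 J_{C_1}` and `x_0 (x_0 - 1) J_{C_0 ∩ C_1}`.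
-/

theorem ZMod.eq_zero_or_eq_one (a : ZMod 2) : a = 0 ∨ a = 1 := by
  revert a; decide

theorem mul_sub_one_dvd_pow_sub_interpolation {R : Type*} [CommRing R] (x : R) (k : ℕ) :
    x * (x - 1) ∣ x ^ k - (1 - x) * 0 ^ k - x := by
  cases k with
  | zero => simp
  | succ k =>
    rw [zero_pow k.succ_ne_zero, mul_zero, sub_zero, pow_succ', ← mul_sub_one]
    exact mul_dvd_mul_left x (sub_one_dvd_pow_sub_one x k)

namespace MvPolynomial

section CommSemiring

variable {σ R : Type*} [CommSemiring R]

noncomputable def partialEval (v : σ → Option R) : MvPolynomial σ R →ₐ[R] MvPolynomial σ R :=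
  aeval fun i => (v i).elim (X i) C

@[simp]
theorem partialEval_X (v : σ → Option R) (i : σ) : partialEval v (X i) = (v i).elim (X i) C :=
  aeval_X _ _

variable {n : ℕ}

theorem finSuccEquiv_rename_succ (a : MvPolynomial (Fin n) R) :
    finSuccEquiv R n (rename Fin.succ a) = Polynomial.C a := by
  have h : (finSuccEquiv R n).toAlgHom.comp (rename Fin.succ) = Polynomial.CAlgHom :=
    algHom_ext fun i => by simp [finSuccEquiv_X_succ]
  exact congr($h a)

theorem finSuccEquiv_partialEval_cons_none (v : Fin n → Option R)
    (f : MvPolynomial (Fin (n + 1)) R) :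
    finSuccEquiv R n (partialEval (Fin.cons none v) f) =
      (finSuccEquiv R n f).map (partialEval v) := by
  have h : (finSuccEquiv R n).toAlgHom.comp (partialEval (Fin.cons none v)) =
      (Polynomial.mapAlgHom (partialEval v)).comp (finSuccEquiv R n).toAlgHom := by
    refine algHom_ext (Fin.cases ?_ fun j => ?_)
    · simp [finSuccEquiv_X_zero]
    · rcases h : v j with _ | a <;> simp [h, finSuccEquiv_apply]
  exact congr($h f)

theorem finSuccEquiv_partialEval_cons_some (v : Fin n → Option R) (b : R)
    (f : MvPolynomial (Fin (n + 1)) R) :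
    finSuccEquiv R n (partialEval (Fin.cons (some b) v) f) =
      Polynomial.C (partialEval v ((finSuccEquiv R n f).eval (C b))) := by
  have h : (finSuccEquiv R n).toAlgHom.comp (partialEval (Fin.cons (some b) v)) =
      Polynomial.CAlgHom.comp ((partialEval v).comp
        (((Polynomial.aeval (C b)).restrictScalars R).comp (finSuccEquiv R n).toAlgHom)) := by
    refine algHom_ext (Fin.cases ?_ fun j => ?_)
    · simp [finSuccEquiv_apply]
    · rcases h : v j with _ | a <;> simp [h, finSuccEquiv_apply]
  exact congr($h f)

end CommSemiring

section CommRing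

variable {σ R : Type*} [CommRing R] {n : ℕ}

theorem sub_aeval_mem_span_range_X_sub (g : σ → MvPolynomial σ R) (f : MvPolynomial σ R) :
    f - aeval g f ∈ Ideal.span (Set.range fun i => X i - g i) := by
  induction f using MvPolynomial.induction_on with
  | C a => simp
  | add p q hp hq =>
    rw [map_add, add_sub_add_comm]
    exact add_mem hp hq
  | mul_X p i hp =>
    have h : p * X i - aeval g (p * X i) = (p - aeval g p) * X i + aeval g p * (X i - g i) := by
      rw [map_mul, aeval_X]; ring
    rw [h]
    exact add_mem (Ideal.mul_mem_right _ _ hp) (Ideal.mul_mem_left _ _ (Ideal.subset_span ⟨i, rfl⟩))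

theorem eq_interpolation_add_sum (f : MvPolynomial (Fin (n + 1)) R) :
    f = (1 - X 0) * rename Fin.succ ((finSuccEquiv R n f).eval 0) +
      X 0 * rename Fin.succ ((finSuccEquiv R n f).eval 1) +
      ∑ k ∈ (finSuccEquiv R n f).support,
        (X 0 ^ k - (1 - X 0) * 0 ^ k - X 0) * rename Fin.succ ((finSuccEquiv R n f).coeff k) := by
  set p := finSuccEquiv R n f
  have hf : f = ∑ k ∈ p.support, X 0 ^ k * rename Fin.succ (p.coeff k) := by
    apply (finSuccEquiv R n).injective
    simp only [map_sum, map_mul, map_pow, finSuccEquiv_X_zero, finSuccEquiv_rename_succ]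
    change p = _
    conv_lhs => rw [p.as_sum_support_C_mul_X_pow]
    simp only [mul_comm]
  have heval (x : MvPolynomial (Fin n) R) : rename Fin.succ (p.eval x) =
      ∑ k ∈ p.support, rename Fin.succ x ^ k * rename Fin.succ (p.coeff k) := by
    simp [Polynomial.eval_eq_sum, Polynomial.sum_def, mul_comm]
  rw [heval, heval, map_zero, map_one, Finset.mul_sum, Finset.mul_sum, ← Finset.sum_add_distrib,
    ← Finset.sum_add_distrib]
  conv_lhs => rw [hf]
  exact Finset.sum_congr rfl fun k _ => by ring

end CommRing

end MvPolynomial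

section NeuralIdeal

variable {n : ℕ}

theorem psmPrime_eq_ker_partialEval (α : Fin n → Option (ZMod 2)) :
    psmPrime α = RingHom.ker (partialEval α) := by
  apply le_antisymm
  · rw [psmPrime, Ideal.span_le]
    rintro _ (⟨i, hi, rfl⟩ | ⟨i, hi, rfl⟩) <;> simp [hi]
  · intro f hf
    have hsub := sub_aeval_mem_span_range_X_sub (fun i => (α i).elim (X i) C) f
    rw [← partialEval, RingHom.mem_ker.mp hf, sub_zero] at hsub
    refine Ideal.span_le.mpr ?_ hsub
    rintro _ ⟨i, rfl⟩
    rcases h : α i with _ | a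
    · simp [h]
    · simp only [h, Option.elim_some]
      rcases ZMod.eq_zero_or_eq_one a with rfl | rfl
      · rw [map_zero, sub_zero]
        exact Ideal.subset_span (.inl ⟨i, h, rfl⟩)
      · rw [map_one, ← neg_sub]
        exact neg_mem (Ideal.subset_span (.inr ⟨i, h, rfl⟩))

theorem indic_mem_psmPrime {c : Fin n → ZMod 2} {α : Fin n → Option (ZMod 2)}
    (hc : c ∉ intervalOf α) : indic c ∈ psmPrime α := by
  obtain ⟨i, a, hia, hne⟩ : ∃ i a, α i = some a ∧ c i ≠ a := by
    simpa [intervalOf] using hc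
  rw [psmPrime_eq_ker_partialEval, RingHom.mem_ker, indic, map_prod]
  refine Finset.prod_eq_zero (Finset.mem_univ i) ?_
  rcases ZMod.eq_zero_or_eq_one (c i) with h | h <;>
    rcases ZMod.eq_zero_or_eq_one a with rfl | rfl <;> simp_all

theorem neuralIdeal_le_psmPrime {C : Set (Fin n → ZMod 2)} {α : Fin n → Option (ZMod 2)}
    (h : intervalOf α ⊆ C) : neuralIdeal C ≤ psmPrime α :=
  Ideal.span_le.2 <| by
    rintro _ ⟨c, hc, rfl⟩
    exact indic_mem_psmPrime fun hα => hc (h hα)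

theorem coeff_finSuccEquiv_mem_psmPrime {α : Fin n → Option (ZMod 2)}
    {f : MvPolynomial (Fin (n + 1)) (ZMod 2)} (hf : f ∈ psmPrime (Fin.cons none α)) (k : ℕ) :
    (finSuccEquiv (ZMod 2) n f).coeff k ∈ psmPrime α := by
  rw [psmPrime_eq_ker_partialEval, RingHom.mem_ker] at hf ⊢
  simpa [finSuccEquiv_partialEval_cons_none] using congr((finSuccEquiv (ZMod 2) n $hf).coeff k)

theorem eval_finSuccEquiv_mem_psmPrime {α : Fin n → Option (ZMod 2)} {b : ZMod 2}
    {f : MvPolynomial (Fin (n + 1)) (ZMod 2)} (hf : f ∈ psmPrime (Fin.cons (some b) α)) :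
    (finSuccEquiv (ZMod 2) n f).eval (C b) ∈ psmPrime α := by
  rw [psmPrime_eq_ker_partialEval, RingHom.mem_ker] at hf ⊢
  simpa [finSuccEquiv_partialEval_cons_some] using congr(finSuccEquiv (ZMod 2) n $hf)

def codeSlice (b : ZMod 2) (C : Set (Fin (n + 1) → ZMod 2)) : Set (Fin n → ZMod 2) :=
  {c | Fin.cons b c ∈ C}

theorem cons_mem_intervalOf_cons_iff {x : ZMod 2} {c : Fin n → ZMod 2}
    {a : Option (ZMod 2)} {α : Fin n → Option (ZMod 2)} :
    Fin.cons x c ∈ intervalOf (Fin.cons a α) ↔ (∀ b, a = some b → x = b) ∧ c ∈ intervalOf α := by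
  simp [intervalOf, Fin.forall_fin_succ]

theorem intervalOf_cons_subset_iff {a : Option (ZMod 2)} {α : Fin n → Option (ZMod 2)}
    {C : Set (Fin (n + 1) → ZMod 2)} :
    intervalOf (Fin.cons a α) ⊆ C ↔
      ∀ x, (∀ b, a = some b → x = b) → intervalOf α ⊆ codeSlice x C := by
  refine ⟨fun h x hx c hc => h (cons_mem_intervalOf_cons_iff.2 ⟨hx, hc⟩), fun h c hc => ?_⟩
  rw [← Fin.cons_self_tail c] at hc ⊢
  rw [cons_mem_intervalOf_cons_iff] at hc
  exact h _ hc.1 hc.2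

theorem intervalOf_cons_some_subset {b : ZMod 2} {α : Fin n → Option (ZMod 2)}
    {C : Set (Fin (n + 1) → ZMod 2)} (h : intervalOf α ⊆ codeSlice b C) :
    intervalOf (Fin.cons (some b) α) ⊆ C :=
  intervalOf_cons_subset_iff.2 fun _ hx => hx b rfl ▸ h

theorem intervalOf_cons_none_subset {α : Fin n → Option (ZMod 2)}
    {C : Set (Fin (n + 1) → ZMod 2)} (h : intervalOf α ⊆ codeSlice 0 C ∩ codeSlice 1 C) :
    intervalOf (Fin.cons none α) ⊆ C :=
  intervalOf_cons_subset_iff.2 fun x _ => by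
    rcases ZMod.eq_zero_or_eq_one x with rfl | rfl
    exacts [h.trans Set.inter_subset_left, h.trans Set.inter_subset_right]

theorem indic_cons (b : ZMod 2) (c : Fin n → ZMod 2) :
    indic (Fin.cons b c) = (if b = 1 then X 0 else 1 - X 0) * rename Fin.succ (indic c) := by
  rw [indic, Fin.prod_univ_succ, indic, map_prod]
  congr 1
  refine Finset.prod_congr rfl fun i _ => ?_
  split_ifs <;> simp_all

theorem span_singleton_mul_map_rename_le_neuralIdeal {m : MvPolynomial (Fin (n + 1)) (ZMod 2)}
    {C : Set (Fin (n + 1) → ZMod 2)} {D : Set (Fin n → ZMod 2)}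
    (hm : ∀ c ∉ D, m * rename Fin.succ (indic c) ∈ neuralIdeal C) :
    Ideal.span {m} * (neuralIdeal D).map (rename Fin.succ) ≤ neuralIdeal C := by
  rw [neuralIdeal, Ideal.map_span, Ideal.span_mul_span', Ideal.span_le]
  rintro _ ⟨_, rfl, _, ⟨_, ⟨c, hc, rfl⟩, rfl⟩, rfl⟩
  exact hm c hc

theorem span_mul_map_neuralIdeal_codeSlice_le (b : ZMod 2) (C : Set (Fin (n + 1) → ZMod 2)) :
    Ideal.span {if b = 1 then X 0 else 1 - X 0} *
      (neuralIdeal (codeSlice b C)).map (rename Fin.succ) ≤ neuralIdeal C :=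
  span_singleton_mul_map_rename_le_neuralIdeal fun c hc =>
    indic_cons b c ▸ Ideal.subset_span ⟨_, hc, rfl⟩

theorem span_mul_map_neuralIdeal_codeSlice_inter_le (C : Set (Fin (n + 1) → ZMod 2)) :
    Ideal.span {X 0 * (X 0 - 1)} *
      (neuralIdeal (codeSlice 0 C ∩ codeSlice 1 C)).map (rename Fin.succ) ≤ neuralIdeal C := by
  refine span_singleton_mul_map_rename_le_neuralIdeal fun c hc => ?_
  have hmem (b : ZMod 2) (hb : c ∉ codeSlice b C) :
      (if b = 1 then X 0 else 1 - X 0) * rename Fin.succ (indic c) ∈ neuralIdeal C :=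
    indic_cons b c ▸ Ideal.subset_span ⟨_, hb, rfl⟩
  rcases not_and_or.1 hc with h | h
  · convert Ideal.mul_mem_left _ (-X 0) (hmem 0 h) using 1
    simp only [zero_ne_one, if_false]
    ring
  · convert Ideal.mul_mem_left _ (X 0 - 1) (hmem 1 h) using 1
    simp only [if_true]
    ring

theorem mem_neuralIdeal_of_codeSlice {C : Set (Fin (n + 1) → ZMod 2)}
    {f : MvPolynomial (Fin (n + 1)) (ZMod 2)}
    (heval : ∀ b, (finSuccEquiv (ZMod 2) n f).eval (MvPolynomial.C b) ∈
      neuralIdeal (codeSlice b C))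
    (hcoeff : ∀ k, (finSuccEquiv (ZMod 2) n f).coeff k ∈
      neuralIdeal (codeSlice 0 C ∩ codeSlice 1 C)) :
    f ∈ neuralIdeal C := by
  have hslice (b : ZMod 2) := span_mul_map_neuralIdeal_codeSlice_le b C
    (Ideal.mul_mem_mul (Ideal.mem_span_singleton_self _) (Ideal.mem_map_of_mem _ (heval b)))
  rw [eq_interpolation_add_sum f]
  refine add_mem (add_mem ?_ ?_) (sum_mem fun k _ => ?_)
  · simpa using hslice 0
  · simpa using hslice 1
  · exact span_mul_map_neuralIdeal_codeSlice_inter_le C <| Ideal.mul_mem_mul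
      (Ideal.mem_span_singleton.2 (mul_sub_one_dvd_pow_sub_interpolation _ k))
      (Ideal.mem_map_of_mem _ (hcoeff k))

end NeuralIdeal

theorem mem_neuralIdeal_of_forall_mem_psmPrime {n : ℕ} {C : Set (Fin n → ZMod 2)}
    {f : MvPolynomial (Fin n) (ZMod 2)} (hf : ∀ α, intervalOf α ⊆ C → f ∈ psmPrime α) :
    f ∈ neuralIdeal C := by
  induction n with
  | zero =>
    by_cases hC : default ∈ C
    · have hf0 := hf default fun c _ => Subsingleton.elim c default ▸ hC
      rw [psmPrime_eq_ker_partialEval, RingHom.mem_ker, partialEval,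
        Subsingleton.elim (fun i => _) X, aeval_X_left_apply] at hf0
      simp [hf0]
    · have h1 : indic default ∈ neuralIdeal C := Ideal.subset_span ⟨default, hC, rfl⟩
      rw [indic, Finset.univ_eq_empty, Finset.prod_empty] at h1
      simpa using Ideal.mul_mem_left _ f h1
  | succ n ih =>
    refine mem_neuralIdeal_of_codeSlice (fun b => ih fun α hα => ?_) (fun k => ih fun α hα => ?_)
    · exact eval_finSuccEquiv_mem_psmPrime (hf _ (intervalOf_cons_some_subset hα))
    · exact coeff_finSuccEquiv_mem_psmPrime (hf _ (intervalOf_cons_none_subset hα)) k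

theorem neuralIdeal_eq_iInf_psmPrime {n : ℕ} (C : Set (Fin n → ZMod 2)) :
    neuralIdeal C =
      ⨅ (α : Fin n → Option (ZMod 2)) (_ : intervalOf α ⊆ C), psmPrime α := by
  refine le_antisymm (le_iInf₂ fun α => neuralIdeal_le_psmPrime) fun f hf => ?_
  refine mem_neuralIdeal_of_forall_mem_psmPrime fun α hα => ?_
  exact Submodule.mem_iInf _ |>.1 (Submodule.mem_iInf _ |>.1 hf α) hα
end
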